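/- Assume additionally that λ(t) → ∞ and u1(t) → ∞ as t → ∞. Let (a0, a1, a2, φ) be a solution of the type-I monopole ODE system on [t*, ∞) with a1(t*) > 0 > a2(t*) and φ(t*) > 0, and suppose a0 is bounded on [t*, ∞). Then a1(t) − a2(t) is unbounded as t → ∞; in fact there exist T ≥ t* and a constant c > 0 such that a1(t) − a2(t) ≥ c·exp(φ(t*)·(t − T)) for all t ≥ T. -/

import Mathlib

open Set Filter

/-- A solution of the type-I monopole ODE system, with `μ = √(u1² − u0²)`:
`a0' = (4λ/μ²)((a1² + a2² − 1)u0 − (a0 − a1² + a2²)u1)`,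
`a1' = (3/(2λ))(a0 − 1)a1 − 2((u1 − u0)/μ)·a2·φ`,
`a2' = −(3/(2λ))(a0 + 1)a2 − 2((u1 + u0)/μ)·a1·φ`,
`φ' = −(6/μ)·a1·a2`. -/
def IsSolTypeIMonopole (u0 : ℝ) (lam u1 a0 a1 a2 phi : ℝ → ℝ) (s : Set ℝ) : Prop :=
  ∀ t ∈ s,
    HasDerivAt a0 ((4 * lam t / (u1 t ^ 2 - u0 ^ 2)) *
      ((a1 t ^ 2 + a2 t ^ 2 - 1) * u0 - (a0 t - a1 t ^ 2 + a2 t ^ 2) * u1 t)) t ∧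
    HasDerivAt a1 ((3 / (2 * lam t)) * (a0 t - 1) * a1 t -
      2 * ((u1 t - u0) / Real.sqrt (u1 t ^ 2 - u0 ^ 2)) * a2 t * phi t) t ∧
    HasDerivAt a2 (-(3 / (2 * lam t)) * (a0 t + 1) * a2 t -
      2 * ((u1 t + u0) / Real.sqrt (u1 t ^ 2 - u0 ^ 2)) * a1 t * phi t) t ∧
    HasDerivAt phi (-(6 / Real.sqrt (u1 t ^ 2 - u0 ^ 2)) * a1 t * a2 t) t

/-- Lower Grönwall inequality: if `f' ≥ K f` on `[a, b]` then
`f b ≥ f a · exp (K (b − a))`. -/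
lemma gronwall_ge {f f' : ℝ → ℝ} {K a b : ℝ} (hab : a ≤ b)
    (hd : ∀ x ∈ Icc a b, HasDerivAt f (f' x) x)
    (hK : ∀ x ∈ Ico a b, K * f x ≤ f' x) :
    f a * Real.exp (K * (b - a)) ≤ f b := by
  have hcont : ContinuousOn (fun t => -f t) (Icc a b) :=
    ContinuousOn.neg (fun x hx => (hd x hx).continuousAt.continuousWithinAt)
  have H := le_gronwallBound_of_liminf_deriv_right_le (f := fun t => -f t)
      (f' := fun t => -f' t) (δ := -f a) (K := K) (ε := 0) hcont
      (fun x hx r hr => by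
        have hgd : HasDerivWithinAt (fun t => -f t) (-f' x) (Ici x) x :=
          ((hd x (Ico_subset_Icc_self hx)).neg).hasDerivWithinAt
        refine (hgd.liminf_right_slope_le hr).mono fun z hz => ?_
        rwa [slope_def_field, div_eq_inv_mul] at hz)
      le_rfl
      (fun x hx => by have := hK x hx; simp only [add_zero]; linarith)
      b ⟨hab, le_rfl⟩
  rw [gronwallBound_ε0] at H
  have H' : -f b ≤ -f a * Real.exp (K * (b - a)) := H
  linarith

/-- The coefficients `(v ∓ w)/√(v² − w²)` are at least `3/4` once `v ≥ 7|w|`. -/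
lemma monopole_c_bounds {v w : ℝ} (h : |w| < v) (h7 : 7 * |w| ≤ v) :
    3 / 4 ≤ (v - w) / Real.sqrt (v ^ 2 - w ^ 2) ∧
    3 / 4 ≤ (v + w) / Real.sqrt (v ^ 2 - w ^ 2) := by
  obtain ⟨hw1, hw2⟩ := abs_lt.1 h
  have hw1' : w ≤ |w| := le_abs_self w
  have hw2' : -w ≤ |w| := neg_le_abs w
  have hv : 0 < v := lt_of_le_of_lt (abs_nonneg w) h
  have hsq : w ^ 2 < v ^ 2 := by nlinarith
  have hm : 0 < Real.sqrt (v ^ 2 - w ^ 2) := Real.sqrt_pos.2 (by linarith)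
  have hm2 : Real.sqrt (v ^ 2 - w ^ 2) ^ 2 = v ^ 2 - w ^ 2 :=
    Real.sq_sqrt (by linarith)
  set m := Real.sqrt (v ^ 2 - w ^ 2)
  constructor
  · rw [le_div_iff₀ hm]
    nlinarith [mul_pos (show (0:ℝ) < 7 * v - 25 * w by nlinarith)
      (show (0:ℝ) < v - w by linarith), mul_pos hm hm,
      mul_pos hm (show (0:ℝ) < v - w by linarith)]
  · rw [le_div_iff₀ hm]
    nlinarith [mul_pos (show (0:ℝ) < 7 * v + 25 * w by nlinarith)
      (show (0:ℝ) < v + w by linarith), mul_pos hm hm,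
      mul_pos hm (show (0:ℝ) < v + w by linarith)]

set_option maxHeartbeats 1600000 in
/-- If additionally `λ(t) → ∞` and `u1(t) → ∞` as `t → ∞`, then a solution of the type-I
monopole ODE system on `[t*, ∞)` with `a1(t*) > 0 > a2(t*)`, `φ(t*) > 0` and `a0` bounded
has `a1 − a2` unbounded as `t → ∞`; in fact there are `T ≥ t*` and `c > 0` such that
`a1(t) − a2(t) ≥ c·exp(φ(t*)(t − T))` for all `t ≥ T`. -/
theorem monopole_exponential_growth (u0 : ℝ) (lam u1 : ℝ → ℝ)
    (hlamc : ContinuousOn lam (Ioi 0))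
    (hu1c : ContinuousOn u1 (Ioi 0))
    (hlam : ∀ t ∈ Ioi (0 : ℝ), 0 < lam t)
    (hu1 : ∀ t ∈ Ioi (0 : ℝ), |u0| < u1 t)
    (hlaminf : Tendsto lam atTop atTop)
    (hu1inf : Tendsto u1 atTop atTop)
    (a0 a1 a2 phi : ℝ → ℝ) (tstar : ℝ) (hts : 0 < tstar)
    (hsol : IsSolTypeIMonopole u0 lam u1 a0 a1 a2 phi (Ici tstar))
    (hinit : 0 < a1 tstar ∧ a2 tstar < 0 ∧ 0 < phi tstar)
    (hbd : ∃ M : ℝ, ∀ t ∈ Ici tstar, |a0 t| ≤ M) :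
    (¬ ∃ M : ℝ, ∀ t ∈ Ici tstar, a1 t - a2 t ≤ M) ∧
    ∃ T c : ℝ, tstar ≤ T ∧ 0 < c ∧
      ∀ t, T ≤ t → c * Real.exp (phi tstar * (t - T)) ≤ a1 t - a2 t := by
  obtain ⟨ha1s, ha2s, hphis⟩ := hinit
  obtain ⟨M, hM⟩ := hbd
  have hM0 : 0 ≤ M := le_trans (abs_nonneg _) (hM tstar self_mem_Ici)
  have hpos : ∀ x, tstar ≤ x → (0:ℝ) < x := fun x hx => lt_of_lt_of_le hts hx
  -- basic positivity facts about `u1` and `μ`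
  have hmu : ∀ x, tstar ≤ x → 0 < u1 x - u0 ∧ 0 < u1 x + u0 ∧
      0 < Real.sqrt (u1 x ^ 2 - u0 ^ 2) := by
    intro x hx
    have h := hu1 x (hpos x hx)
    have h1 : u0 < u1 x := lt_of_le_of_lt (le_abs_self u0) h
    have h2 : -u0 < u1 x := lt_of_le_of_lt (neg_le_abs u0) h
    exact ⟨by linarith, by linarith, Real.sqrt_pos.2 (by nlinarith)⟩
  -- a positive lower bound for `lam` on `[tstar, ∞)`
  obtain ⟨T0, hT0⟩ := eventually_atTop.1 (hlaminf.eventually_ge_atTop 1)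
  obtain ⟨x0, hx0, hx0min⟩ := isCompact_Icc.exists_isMinOn
    (nonempty_Icc.2 (le_max_left tstar T0))
    (hlamc.mono (fun x hx => hpos x hx.1))
  set lmin : ℝ := min (lam x0) 1 with hlmin_def
  have hlmin_pos : 0 < lmin := lt_min (hlam x0 (hpos x0 hx0.1)) one_pos
  have hlmin : ∀ x, tstar ≤ x → lmin ≤ lam x := by
    intro x hx
    rcases le_total x (max tstar T0) with h | h
    · exact le_trans (min_le_left _ _) (hx0min ⟨hx, h⟩)
    · exact le_trans (min_le_right _ _) (hT0 x (le_trans (le_max_right _ _) h))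
  -- bound on the coefficients `3/(2λ)·(a0 ± 1)`
  have habs : ∀ x, tstar ≤ x → ∀ L : ℝ, 0 < L → L ≤ lam x → ∀ y : ℝ,
      -(M+1) ≤ y → y ≤ M+1 →
      -(3*(M+1)/(2*L)) ≤ 3 / (2 * lam x) * y ∧ 3 / (2 * lam x) * y ≤ 3*(M+1)/(2*L) := by
    intro x hx L hL hLx y hy1 hy2
    have hlx : 0 < lam x := hlam x (hpos x hx)
    have hq : 0 < 3 / (2 * lam x) := by positivity
    have hqr : 3 / (2 * lam x) ≤ 3 / (2 * L) := by gcongr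
    have h2 : 3/(2*lam x)*(M+1) ≤ 3/(2*L)*(M+1) :=
      mul_le_mul_of_nonneg_right hqr (by linarith)
    have h3 : 3/(2*L)*(M+1) = 3*(M+1)/(2*L) := by ring
    have h1 := mul_le_mul_of_nonneg_left hy1 hq.le
    have h1' := mul_le_mul_of_nonneg_left hy2 hq.le
    constructor <;> nlinarith [h1, h1', h2, h3]
  set K : ℝ := 3*(M+1)/(2*lmin) with hK_def
  -- key step: if the signs hold on `[tstar, s)`, they hold (strictly) at `s`,
  -- and `phi s ≥ phi tstar`
  have key : ∀ s, tstar ≤ s → (∀ x ∈ Ico tstar s, 0 < a1 x ∧ a2 x < 0) →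
      0 < a1 s ∧ a2 s < 0 ∧ phi tstar ≤ phi s := by
    intro s hs hgood
    have hphige : ∀ x ∈ Icc tstar s, phi tstar ≤ phi x := by
      intro x hx
      have h := gronwall_ge (K := 0) (f := phi)
        (f' := fun y => -(6 / Real.sqrt (u1 y ^ 2 - u0 ^ 2)) * a1 y * a2 y) hx.1
        (fun y hy => (hsol y hy.1).2.2.2)
        (fun y hy => by
          obtain ⟨h1, h2⟩ := hgood y ⟨hy.1, lt_of_lt_of_le hy.2 hx.2⟩
          have hmy := (hmu y hy.1).2.2
          have h6 : 0 < 6 / Real.sqrt (u1 y ^ 2 - u0 ^ 2) := by positivity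
          nlinarith [mul_pos (mul_pos h6 h1) (neg_pos.2 h2)])
      simpa using h
    have ha1b := gronwall_ge (K := -K) (f := a1)
      (f' := fun y => (3 / (2 * lam y)) * (a0 y - 1) * a1 y -
        2 * ((u1 y - u0) / Real.sqrt (u1 y ^ 2 - u0 ^ 2)) * a2 y * phi y) hs
      (fun y hy => (hsol y hy.1).2.1)
      (fun y hy => by
        obtain ⟨h1, h2⟩ := hgood y hy
        have hmy := hmu y hy.1
        have ha := abs_le.1 (hM y hy.1)
        have hc1 := (habs y hy.1 lmin hlmin_pos (hlmin y hy.1) (a0 y - 1)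
          (by linarith) (by linarith)).1
        have hphiy : 0 < phi y :=
          lt_of_lt_of_le hphis (hphige y (Ico_subset_Icc_self hy))
        have hcm : 0 < (u1 y - u0) / Real.sqrt (u1 y ^ 2 - u0 ^ 2) :=
          div_pos hmy.1 hmy.2.2
        nlinarith [mul_le_mul_of_nonneg_right hc1 h1.le,
          mul_pos (mul_pos (mul_pos (show (0:ℝ) < 2 by norm_num) hcm)
            (neg_pos.2 h2)) hphiy])
    have ha2b := gronwall_ge (K := -K) (f := fun t => -a2 t)
      (f' := fun y => -(-(3 / (2 * lam y)) * (a0 y + 1) * a2 y -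
        2 * ((u1 y + u0) / Real.sqrt (u1 y ^ 2 - u0 ^ 2)) * a1 y * phi y)) hs
      (fun y hy => ((hsol y hy.1).2.2.1).neg)
      (fun y hy => by
        obtain ⟨h1, h2⟩ := hgood y hy
        have hmy := hmu y hy.1
        have ha := abs_le.1 (hM y hy.1)
        have hc2 := (habs y hy.1 lmin hlmin_pos (hlmin y hy.1) (a0 y + 1)
          (by linarith) (by linarith)).2
        have hphiy : 0 < phi y :=
          lt_of_lt_of_le hphis (hphige y (Ico_subset_Icc_self hy))
        have hcp : 0 < (u1 y + u0) / Real.sqrt (u1 y ^ 2 - u0 ^ 2) :=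
          div_pos hmy.2.1 hmy.2.2
        nlinarith [mul_le_mul_of_nonpos_right hc2 h2.le,
          mul_pos (mul_pos (mul_pos (show (0:ℝ) < 2 by norm_num) hcp) h1) hphiy])
    refine ⟨lt_of_lt_of_le ?_ ha1b, ?_, hphige s ⟨hs, le_rfl⟩⟩
    · positivity
    · have : 0 < (-a2 tstar) * Real.exp (-K * (s - tstar)) := by
        have : 0 < -a2 tstar := by linarith
        positivity
      linarith
  -- invariance of the region `a1 > 0 > a2`
  have hP : ∀ t, tstar ≤ t → 0 < a1 t ∧ a2 t < 0 := by
    by_contra hbad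
    push_neg at hbad
    obtain ⟨t0, ht0, hbad0⟩ := hbad
    set B : Set ℝ := {t | tstar ≤ t ∧ ¬(0 < a1 t ∧ a2 t < 0)} with hB_def
    have hBne : B.Nonempty :=
      ⟨t0, ht0, fun h => absurd (hbad0 h.1) (not_le.2 h.2)⟩
    have hBlb : ∀ t ∈ B, tstar ≤ t := fun t ht => ht.1
    have hBbdd : BddBelow B := ⟨tstar, hBlb⟩
    set s := sInf B with hs_def
    have hsts : tstar ≤ s := le_csInf hBne hBlb
    have hgood : ∀ x ∈ Ico tstar s, 0 < a1 x ∧ a2 x < 0 := by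
      intro x hx
      by_contra hc
      exact absurd (csInf_le hBbdd ⟨hx.1, hc⟩) (not_le.2 hx.2)
    obtain ⟨hA, hB2, -⟩ := key s hsts hgood
    have hca1 : ContinuousAt a1 s := (hsol s hsts).2.1.continuousAt
    have hca2 : ContinuousAt a2 s := (hsol s hsts).2.2.1.continuousAt
    have hmem : a1 ⁻¹' (Ioi 0) ∩ a2 ⁻¹' (Iio 0) ∈ nhds s :=
      inter_mem (hca1 (Ioi_mem_nhds hA)) (hca2 (Iio_mem_nhds hB2))
    obtain ⟨ε, hε, hball⟩ := Metric.mem_nhds_iff.1 hmem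
    have : s + ε/2 ≤ s := by
      refine le_csInf hBne fun b hb => ?_
      by_contra hlt
      push_neg at hlt
      have hsb : s ≤ b := csInf_le hBbdd hb
      have : b ∈ Metric.ball s ε := by
        rw [Metric.mem_ball, Real.dist_eq, abs_of_nonneg (by linarith)]
        linarith
      exact hb.2 ⟨(hball this).1, (hball this).2⟩
    linarith
  have hinv : ∀ t, tstar ≤ t → 0 < a1 t ∧ a2 t < 0 ∧ phi tstar ≤ phi t :=
    fun t ht => key t ht (fun x hx => hP x hx.1)
  -- choose `T` beyond which `lam` and `u1` are large
  obtain ⟨T1, hT1⟩ := eventually_atTop.1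
    (hlaminf.eventually_ge_atTop (3*(M+1)/(phi tstar)))
  obtain ⟨T2, hT2⟩ := eventually_atTop.1 (hu1inf.eventually_ge_atTop (7*|u0|))
  set T : ℝ := max tstar (max T1 T2) with hT_def
  have hTs : tstar ≤ T := le_max_left _ _
  have hhalf : 3*(M+1)/(2*(3*(M+1)/(phi tstar))) = phi tstar / 2 := by
    rw [eq_div_iff (by norm_num : (2:ℝ) ≠ 0)]
    field_simp
  have main : ∀ t, T ≤ t →
      (a1 T - a2 T) * Real.exp (phi tstar * (t - T)) ≤ a1 t - a2 t := by
    intro t ht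
    have h := gronwall_ge (K := phi tstar) (f := fun y => a1 y - a2 y)
      (f' := fun y =>
        ((3 / (2 * lam y)) * (a0 y - 1) * a1 y -
          2 * ((u1 y - u0) / Real.sqrt (u1 y ^ 2 - u0 ^ 2)) * a2 y * phi y) -
        (-(3 / (2 * lam y)) * (a0 y + 1) * a2 y -
          2 * ((u1 y + u0) / Real.sqrt (u1 y ^ 2 - u0 ^ 2)) * a1 y * phi y))
      ht
      (fun y hy => ((hsol y (le_trans hTs hy.1)).2.1).sub
        ((hsol y (le_trans hTs hy.1)).2.2.1))
      (fun y hy => by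
        have hys : tstar ≤ y := le_trans hTs hy.1
        obtain ⟨h1, h2, h3⟩ := hinv y hys
        have hlamy : 3*(M+1)/(phi tstar) ≤ lam y :=
          hT1 y (le_trans (le_trans (le_max_left T1 T2) (le_max_right tstar _)) hy.1)
        have hLpos : 0 < 3*(M+1)/(phi tstar) := by positivity
        have hq1 := habs y hys _ hLpos hlamy (a0 y - 1)
          (by have := abs_le.1 (hM y hys); linarith)
          (by have := abs_le.1 (hM y hys); linarith)
        have hq2 := habs y hys _ hLpos hlamy (a0 y + 1)
          (by have := abs_le.1 (hM y hys); linarith)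
          (by have := abs_le.1 (hM y hys); linarith)
        rw [hhalf] at hq1 hq2
        have hu1y : 7 * |u0| ≤ u1 y :=
          hT2 y (le_trans (le_trans (le_max_right T1 T2) (le_max_right tstar _)) hy.1)
        obtain ⟨hcm, hcp⟩ := monopole_c_bounds (hu1 y (hpos y hys)) hu1y
        have hcm0 : (0:ℝ) ≤ (u1 y - u0) / Real.sqrt (u1 y ^ 2 - u0 ^ 2) :=
          le_trans (by norm_num) hcm
        have hcp0 : (0:ℝ) ≤ (u1 y + u0) / Real.sqrt (u1 y ^ 2 - u0 ^ 2) :=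
          le_trans (by norm_num) hcp
        have hml : (3:ℝ)/4 * phi tstar ≤
            ((u1 y - u0) / Real.sqrt (u1 y ^ 2 - u0 ^ 2)) * phi y :=
          mul_le_mul hcm h3 hphis.le hcm0
        have hmp : (3:ℝ)/4 * phi tstar ≤
            ((u1 y + u0) / Real.sqrt (u1 y ^ 2 - u0 ^ 2)) * phi y :=
          mul_le_mul hcp h3 hphis.le hcp0
        have hh1 : (-(phi tstar / 2)) * a1 y ≤
            3 / (2 * lam y) * (a0 y - 1) * a1 y :=
          mul_le_mul_of_nonneg_right hq1.1 h1.le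
        have hh2 : (phi tstar / 2) * a2 y ≤ 3 / (2 * lam y) * (a0 y + 1) * a2 y :=
          mul_le_mul_of_nonpos_right hq2.2 h2.le
        have hh3 : ((3:ℝ)/4 * phi tstar) * a1 y ≤
            (((u1 y + u0) / Real.sqrt (u1 y ^ 2 - u0 ^ 2)) * phi y) * a1 y :=
          mul_le_mul_of_nonneg_right hmp h1.le
        have hh4 : ((3:ℝ)/4 * phi tstar) * (-a2 y) ≤
            (((u1 y - u0) / Real.sqrt (u1 y ^ 2 - u0 ^ 2)) * phi y) * (-a2 y) :=
          mul_le_mul_of_nonneg_right hml (by linarith)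
        nlinarith [hh1, hh2, hh3, hh4])
    simpa using h
  have hc : 0 < a1 T - a2 T := by
    obtain ⟨h1, h2⟩ := hP T hTs
    linarith
  refine ⟨?_, T, a1 T - a2 T, hTs, hc, main⟩
  rintro ⟨Mb, hMb⟩
  set t : ℝ := T + (|Mb| + 1) / ((a1 T - a2 T) * phi tstar) with ht_def
  have hden : 0 < (a1 T - a2 T) * phi tstar := mul_pos hc hphis
  have htT : T ≤ t := le_add_of_nonneg_right (by positivity)
  have h1 := main t htT
  have h2 := hMb t (mem_Ici.2 (le_trans hTs htT))
  have h3 : phi tstar * (t - T) + 1 ≤ Real.exp (phi tstar * (t - T)) :=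
    Real.add_one_le_exp _
  have h4 : (a1 T - a2 T) * (phi tstar * (t - T) + 1) ≤
      (a1 T - a2 T) * Real.exp (phi tstar * (t - T)) :=
    mul_le_mul_of_nonneg_left h3 hc.le
  have h5 : (a1 T - a2 T) * (phi tstar * (t - T)) = |Mb| + 1 := by
    have he : t - T = (|Mb| + 1) / ((a1 T - a2 T) * phi tstar) := by
      rw [ht_def]; ring
    rw [he]
    field_simp
  have h6 : Mb ≤ |Mb| := le_abs_self Mb
  nlinarith [h1, h2, h4, h5, h6, hc]
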